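/- arXiv:1102.4662 — 7 statements merged into one kernel-verified Lean document; each statement's English description precedes it below -/
import Mathlib

section
/- Let n ≥ 1 be an integer and let a ∈ ℂ satisfy a ≠ 0 and a^k ≠ 1 for all integers k with 1 ≤ k < n. Write ∏_{k=1}^n (z - a^k) = z^n - ∑_{k=0}^{n-1} b_k z^k as polynomials in z. Then for every k with 0 ≤ k ≤ n-1, b_k = a^{n-k} · ∏_{0 ≤ l < n, l ≠ k} (a^n - a^l) · ∏_{0 ≤ l < n, l ≠ k} (a^k - a^l)^{-1}. (The hypotheses guarantee that a^k - a^l ≠ 0 for 0 ≤ l < n, l ≠ k, so the inverse is well defined.) -/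
/-- Coefficients of `∏_{k=1}^n (z - a^k)`: writing the product as
`z^n - ∑_{k=0}^{n-1} b_k z^k`, we have
`b_k = a^{n-k} · ∏_{0 ≤ l < n, l ≠ k} (a^n - a^l) · ∏_{0 ≤ l < n, l ≠ k} (a^k - a^l)^{-1}`. -/
theorem coeff_prod_X_sub_pow (n : ℕ) (hn : 1 ≤ n) (a : ℂ) (ha : a ≠ 0)
    (ha' : ∀ k : ℕ, 1 ≤ k → k < n → a ^ k ≠ 1)
    (b : ℕ → ℂ)
    (hb : ∀ t, b t = -((∏ m ∈ Finset.Icc 1 n, (Polynomial.X - Polynomial.C (a ^ m))).coeff t)) :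
    ∀ k < n, b k =
      a ^ (n - k) * (∏ l ∈ (Finset.range n).erase k, ((a : ℂ) ^ n - a ^ l)) *
        (∏ l ∈ (Finset.range n).erase k, ((a : ℂ) ^ k - a ^ l))⁻¹ := by
  classical
  -- distinctness of powers
  have hlt : ∀ i j : ℕ, i < j → j - i < n → a ^ i ≠ a ^ j := by
    intro i j hij hd he
    apply ha' (j - i) (by omega) hd
    have h2 : a ^ i * a ^ (j - i) = a ^ i * 1 := by
      rw [mul_one, ← pow_add]
      rw [show i + (j - i) = j by omega]
      exact he.symm
    exact mul_left_cancel₀ (pow_ne_zero i ha) h2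
  have hinj : Set.InjOn (fun l : ℕ => a ^ l) (Finset.range n) := by
    intro i hi j hj h
    simp only [Finset.coe_range, Set.mem_Iio] at hi hj
    by_contra hij
    rcases lt_or_gt_of_ne hij with h' | h'
    · exact hlt i j h' (by omega) h
    · exact hlt j i h' (by omega) h.symm
  have hinjw : Set.InjOn (fun l : ℕ => a ^ (l + 1)) (Finset.range n) := by
    intro i hi j hj h
    simp only [Finset.coe_range, Set.mem_Iio] at hi hj
    by_contra hij
    rcases lt_or_gt_of_ne hij with h' | h'
    · exact hlt (i + 1) (j + 1) (by omega) (by omega) h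
    · exact hlt (j + 1) (i + 1) (by omega) (by omega) h.symm
  set c : ℕ → ℂ := fun k => a ^ (n - k) * (∏ l ∈ (Finset.range n).erase k, (a ^ n - a ^ l)) *
        (∏ l ∈ (Finset.range n).erase k, (a ^ k - a ^ l))⁻¹ with hc
  set P : Polynomial ℂ := ∏ m ∈ Finset.Icc 1 n, (Polynomial.X - Polynomial.C (a ^ m)) with hP
  set Q : Polynomial ℂ := Polynomial.X ^ n - P with hQ
  set R : Polynomial ℂ := ∑ i ∈ Finset.range n, Polynomial.C (c i) * Polynomial.X ^ i with hR
  -- degree bounds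
  have hPmonic : P.Monic := Polynomial.monic_prod_of_monic _ _ fun m _ =>
    Polynomial.monic_X_sub_C _
  have hPdeg : P.natDegree = n := by
    rw [hP, Polynomial.natDegree_prod _ _ fun m _ => Polynomial.X_sub_C_ne_zero _]
    rw [Finset.sum_congr rfl fun x _ => Polynomial.natDegree_X_sub_C (a ^ x)]
    simp [Nat.card_Icc]
  have hQdeg : Q.degree < (n : WithBot ℕ) := by
    have := Polynomial.degree_sub_lt (p := (Polynomial.X ^ n : Polynomial ℂ)) (q := P)
      (by rw [Polynomial.degree_X_pow, Polynomial.degree_eq_natDegree hPmonic.ne_zero, hPdeg])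
      (pow_ne_zero n Polynomial.X_ne_zero) ?_
    · rwa [Polynomial.degree_X_pow] at this
    · rw [Polynomial.leadingCoeff_X_pow, hPmonic.leadingCoeff]
  have hRdeg : R.degree < (n : WithBot ℕ) := by
    refine lt_of_le_of_lt (Polynomial.degree_sum_le _ _) ?_
    rw [Finset.sup_lt_iff (by exact_mod_cast WithBot.bot_lt_coe n)]
    intro i hi
    refine lt_of_le_of_lt (Polynomial.degree_C_mul_X_pow_le _ _) ?_
    exact_mod_cast Finset.mem_range.mp hi
  -- the key interpolation identity
  have key : ∀ j < n, ∑ i ∈ Finset.range n, (a ^ i) ^ j *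
      ((∏ l ∈ (Finset.range n).erase i, (a ^ n - a ^ l)) *
       (∏ l ∈ (Finset.range n).erase i, (a ^ i - a ^ l))⁻¹) = (a ^ n) ^ j := by
    intro j hj
    have hdeg : (Polynomial.X ^ j : Polynomial ℂ).degree < (Finset.range n).card := by
      rw [Finset.card_range, Polynomial.degree_X_pow]
      exact_mod_cast hj
    have h := Lagrange.eq_interpolate (v := fun l : ℕ => a ^ l) hinj hdeg
    have h2 := congrArg (Polynomial.eval (a ^ n)) h
    rw [Lagrange.interpolate_apply] at h2
    simp only [Polynomial.eval_pow, Polynomial.eval_X, Polynomial.eval_finset_sum,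
      Polynomial.eval_mul, Polynomial.eval_C] at h2
    rw [h2]
    refine Finset.sum_congr rfl fun i hi => ?_
    congr 1
    rw [Lagrange.basis, Polynomial.eval_prod]
    rw [show (∏ l ∈ (Finset.range n).erase i,
        Polynomial.eval (a ^ n) (Lagrange.basisDivisor (a ^ i) (a ^ l)))
      = ∏ l ∈ (Finset.range n).erase i, ((a ^ i - a ^ l)⁻¹ * (a ^ n - a ^ l)) from
      Finset.prod_congr rfl fun l _ => by
        simp [Lagrange.basisDivisor]]
    rw [Finset.prod_mul_distrib, ← Finset.prod_inv_distrib]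
    ring
  -- evaluation agreement at the nodes a^(i+1)
  have heval : ∀ i ∈ Finset.range n,
      Q.eval ((fun l : ℕ => a ^ (l + 1)) i) = R.eval ((fun l : ℕ => a ^ (l + 1)) i) := by
    intro i hi
    rw [Finset.mem_range] at hi
    have hPz : P.eval (a ^ (i + 1)) = 0 := by
      rw [hP, Polynomial.eval_prod]
      exact Finset.prod_eq_zero (Finset.mem_Icc.mpr ⟨by omega, by omega⟩ : i + 1 ∈ Finset.Icc 1 n)
        (by simp)
    have hterm : ∀ k ∈ Finset.range n, c k * (a ^ (i + 1)) ^ k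
        = a ^ n * ((a ^ k) ^ i * ((∏ l ∈ (Finset.range n).erase k, (a ^ n - a ^ l)) *
          (∏ l ∈ (Finset.range n).erase k, (a ^ k - a ^ l))⁻¹)) := by
      intro k hk
      rw [Finset.mem_range] at hk
      have hx : a ^ (n - k) * (a ^ (i + 1)) ^ k = a ^ n * (a ^ k) ^ i := by
        have h1 : (a ^ (i + 1)) ^ k = a ^ k * (a ^ k) ^ i := by
          rw [← pow_mul, ← pow_mul, ← pow_add]
          congr 1
          ring
        rw [h1, ← mul_assoc, ← pow_add, show n - k + k = n by omega]
      calc c k * (a ^ (i + 1)) ^ k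
          = (a ^ (n - k) * (a ^ (i + 1)) ^ k) *
            ((∏ l ∈ (Finset.range n).erase k, (a ^ n - a ^ l)) *
             (∏ l ∈ (Finset.range n).erase k, (a ^ k - a ^ l))⁻¹) := by rw [hc]; ring
        _ = _ := by rw [hx]; ring
    simp only [hQ, hR, Polynomial.eval_sub, Polynomial.eval_pow, Polynomial.eval_X, hPz,
      sub_zero, Polynomial.eval_finset_sum, Polynomial.eval_mul, Polynomial.eval_C]
    rw [Finset.sum_congr rfl hterm, ← Finset.mul_sum, key i hi]
    rw [← pow_mul, ← pow_mul, ← pow_add]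
    congr 1
    ring
  have hQR : Q = R := by
    refine Polynomial.eq_of_degrees_lt_of_eval_index_eq (s := Finset.range n)
      (v := fun l : ℕ => a ^ (l + 1)) hinjw ?_ ?_ heval
    · rwa [Finset.card_range]
    · rwa [Finset.card_range]
  intro k hk
  have hRk : R.coeff k = c k := by
    rw [hR, Polynomial.finset_sum_coeff]
    rw [Finset.sum_congr rfl (fun i _ => by rw [Polynomial.coeff_C_mul, Polynomial.coeff_X_pow])]
    simp only [mul_ite, mul_one, mul_zero]
    rw [Finset.sum_ite_eq (Finset.range n) k c, if_pos (Finset.mem_range.mpr hk)]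
  have hQk : Q.coeff k = -(P.coeff k) := by
    rw [hQ, Polynomial.coeff_sub, Polynomial.coeff_X_pow, if_neg (by omega : ¬ k = n), zero_sub]
  show b k = c k
  rw [hb k, ← hQk, hQR, hRk]
end

section
/- Let n ≥ 1 be an integer, let w = exp(πi/n) ∈ ℂ, and let g(z) = ∏_{k=1}^{n-1} (z - w^k) ∈ ℂ[z]. Then the n polynomials z ↦ g(w^{-2r}·z) for r = 1, 2, …, n are linearly independent over ℂ. (This statement is equivalent to the non-vanishing of the Atiyah determinant at the vertices of a regular n-gon, i.e., to Atiyah's first conjecture in that case.) -/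
/-!
The `j`-th coefficient of `g(c z)` is `c ^ j * g_j`, so the coefficient vectors of the `n`
dilates form the Vandermonde matrix of the distinct points `c_r = w^{-2(r+1)}` (the `n`-th roots
of unity) times `diag(g_0, …, g_{n-1})`. It remains to see that no coefficient of `g` vanishes.
Comparing coefficients in `(z - w^{n-1}) g(w z) = w^{n-1} (z - 1) g(z)` gives
`g_j (w^j - w^{n-1}) = g_{j+1} w^{n-1} (w^{j+1} - 1)`, and `w^{j+1} ≠ 1` because `w` is a
primitive `2n`-th root of unity, so non-vanishing propagates down from the leading coefficient.
-/

open Polynomial Finset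

theorem Polynomial.linearIndependent_comp_C_mul_X {R : Type*} [CommRing R] [IsDomain R]
    {n : ℕ} (p : R[X]) {c : Fin n → R}
    (hc : Function.Injective c) (hp : ∀ i < n, p.coeff i ≠ 0) :
    LinearIndependent R fun r => p.comp (C (c r) * X) := by
  rw [Fintype.linearIndependent_iff]
  intro v hv
  refine congrFun (Matrix.eq_zero_of_forall_pow_sum_mul_pow_eq_zero hc fun i => ?_)
  have hcoeff : p.coeff i * ∑ r, v r * c r ^ (i : ℕ) = 0 := by
    have := congrArg (coeff · i) hv
    simp only [finsetSum_coeff, coeff_smul, comp_C_mul_X_coeff, smul_eq_mul, coeff_zero] at this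
    rw [mul_sum, ← this]
    exact sum_congr rfl fun r _ => by ring
  exact (mul_eq_zero.mp hcoeff).resolve_left (hp i i.isLt)

section GeometricRootsProduct

variable {R : Type*} [CommRing R] (q : R)

theorem X_sub_C_pow_mul_prod_comp_C_mul_X (m : ℕ) :
    (X - C (q ^ m)) * (∏ k ∈ Icc 1 m, (X - C (q ^ k))).comp (C q * X) =
      C (q ^ m) * ((X - 1) * ∏ k ∈ Icc 1 m, (X - C (q ^ k))) := by
  induction m with
  | zero => simp
  | succ m ih =>
    rw [prod_Icc_succ_top (by omega), mul_comp, sub_comp, X_comp, C_comp]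
    simp only [C_pow] at ih ⊢
    linear_combination (C q * (X - C q ^ (m + 1))) * ih

theorem coeff_prod_X_sub_C_pow_mul (m i : ℕ) :
    (∏ k ∈ Icc 1 m, (X - C (q ^ k))).coeff i * (q ^ i - q ^ m) =
      (∏ k ∈ Icc 1 m, (X - C (q ^ k))).coeff (i + 1) * (q ^ m * (q ^ (i + 1) - 1)) := by
  have h := congrArg (coeff · (i + 1)) (X_sub_C_pow_mul_prod_comp_C_mul_X q m)
  simp only [sub_mul, mul_sub, coeff_sub, coeff_X_mul, coeff_C_mul, comp_C_mul_X_coeff,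
    one_mul] at h
  linear_combination h

theorem natDegree_prod_X_sub_C_pow [Nontrivial R] (m : ℕ) :
    (∏ k ∈ Icc 1 m, (X - C (q ^ k))).natDegree = m := by
  rw [natDegree_prod_of_monic _ _ fun k _ => monic_X_sub_C _]
  simp only [natDegree_X_sub_C, sum_const, Nat.card_Icc, smul_eq_mul, mul_one, Nat.add_sub_cancel]

theorem coeff_prod_X_sub_C_pow_ne_zero [IsDomain R] (hq₀ : q ≠ 0) {m : ℕ}
    (hq : ∀ k ∈ Icc 1 m, q ^ k ≠ 1) {j : ℕ} (hj : j ≤ m) :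
    (∏ k ∈ Icc 1 m, (X - C (q ^ k))).coeff j ≠ 0 := by
  induction hj using Nat.decreasingInduction with
  | self =>
    have hmonic := monic_prod_of_monic (Icc 1 m) _ fun k _ => monic_X_sub_C (q ^ k)
    rw [Monic, leadingCoeff, natDegree_prod_X_sub_C_pow] at hmonic
    exact hmonic ▸ one_ne_zero
  | of_succ i hi ih =>
    have hfactor : q ^ m * (q ^ (i + 1) - 1) ≠ 0 :=
      mul_ne_zero (pow_ne_zero _ hq₀) (sub_ne_zero.mpr (hq _ (mem_Icc.mpr ⟨by omega, hi⟩)))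
    exact left_ne_zero_of_mul (coeff_prod_X_sub_C_pow_mul q m i ▸ mul_ne_zero ih hfactor)

end GeometricRootsProduct

theorem IsPrimitiveRoot.injective_pow_succ {M : Type*} [CommMonoidWithZero M]
    [IsCancelMulZero M] [Nontrivial M] {ζ : M} {n : ℕ} (h : IsPrimitiveRoot ζ n) : Function.Injective fun r : Fin n => ζ ^ ((r : ℕ) + 1) := by
  intro r s hrs
  simp only [pow_succ] at hrs
  exact Fin.ext (h.pow_inj r.isLt s.isLt (mul_right_cancel₀ (h.ne_zero (Fin.pos r).ne') hrs))

theorem Complex.isPrimitiveRoot_exp_pi_mul_I_div {n : ℕ} (hn : n ≠ 0) :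
    IsPrimitiveRoot (exp (Real.pi * I / n)) (2 * n) := by
  convert isPrimitiveRoot_exp (2 * n) (by omega) using 2
  push_cast
  field_simp

/-- For `w = exp(πi/n)` and `g(z) = ∏_{k=1}^{n-1} (z - w^k)`, the `n` polynomials
`z ↦ g(w^{-2r}·z)`, `r = 1, …, n`, are linearly independent over `ℂ`. -/
theorem linearIndependent_regular_ngon_polynomials (n : ℕ) (hn : 1 ≤ n)
    (w : ℂ) (hw : w = Complex.exp (Real.pi * Complex.I / n))
    (g : Polynomial ℂ)
    (hg : g = ∏ k ∈ Finset.Icc 1 (n - 1), (Polynomial.X - Polynomial.C (w ^ k))) :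
    LinearIndependent ℂ (fun r : Fin n =>
      g.comp (Polynomial.C (w ^ ((-2 : ℤ) * ((r : ℕ) + 1))) * Polynomial.X)) := by
  have hprim : IsPrimitiveRoot w (2 * n) :=
    hw ▸ Complex.isPrimitiveRoot_exp_pi_mul_I_div (by omega)
  have hζ : IsPrimitiveRoot (w ^ (-2 : ℤ)) n := by
    simpa [zpow_neg] using (hprim.pow (by omega) rfl).inv
  have hc : Function.Injective fun r : Fin n => w ^ ((-2 : ℤ) * ((r : ℕ) + 1)) := by
    convert hζ.injective_pow_succ using 2 with r
    rw [zpow_mul]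
    norm_cast
  have hw_pow : ∀ k ∈ Icc 1 (n - 1), w ^ k ≠ 1 := fun k hk => by
    rw [mem_Icc] at hk
    exact hprim.pow_ne_one_of_pos_of_lt (by omega) (by omega)
  exact linearIndependent_comp_C_mul_X g hc fun i hi =>
    hg ▸ coeff_prod_X_sub_C_pow_ne_zero w (hprim.ne_zero (by omega)) hw_pow (by omega)
end

section
/- Let A, B, C be three pairwise distinct points in a Euclidean space (e.g., ℝ²) with side lengths a = dist(B, C), b = dist(A, C), c = dist(A, B). Then d₃(a, b, c) = 2abc·(cos ∠BAC + cos ∠ABC + cos ∠BCA - 1), where d₃(a, b, c) = (a + b - c)(a + c - b)(b + c - a). -/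
open EuclideanGeometry

/-- For a triangle `ABC` with sides `a = BC`, `b = AC`, `c = AB`:
`d₃(a,b,c) = 2abc·(cos A + cos B + cos C - 1)`, where
`d₃(a,b,c) = (a+b-c)(a+c-b)(b+c-a)`. -/
theorem d3_eq_two_mul_sides_mul_sum_cos_sub_one
    (A B C : EuclideanSpace ℝ (Fin 2)) (hAB : A ≠ B) (hAC : A ≠ C) (hBC : B ≠ C) :
    (dist B C + dist A C - dist A B) * (dist B C + dist A B - dist A C) *
        (dist A C + dist A B - dist B C) =
      2 * (dist B C) * (dist A C) * (dist A B) *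
        (Real.cos (∠ B A C) + Real.cos (∠ A B C) + Real.cos (∠ A C B) - 1) := by
  have ha : dist B C ≠ 0 := dist_ne_zero.mpr hBC
  have hb : dist A C ≠ 0 := dist_ne_zero.mpr hAC
  have hc : dist A B ≠ 0 := dist_ne_zero.mpr hAB
  have h1 := EuclideanGeometry.law_cos B A C
  have h2 := EuclideanGeometry.law_cos A B C
  have h3 := EuclideanGeometry.law_cos A C B
  rw [dist_comm B A, dist_comm C A] at h1
  rw [dist_comm C B] at h2
  have e1 : Real.cos (∠ B A C) =
      (dist A B * dist A B + dist A C * dist A C - dist B C * dist B C) /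
        (2 * dist A B * dist A C) := by
    field_simp
    nlinarith [h1]
  have e2 : Real.cos (∠ A B C) =
      (dist A B * dist A B + dist B C * dist B C - dist A C * dist A C) /
        (2 * dist A B * dist B C) := by
    field_simp
    nlinarith [h2]
  have e3 : Real.cos (∠ A C B) =
      (dist A C * dist A C + dist B C * dist B C - dist A B * dist A B) /
        (2 * dist A C * dist B C) := by
    field_simp
    nlinarith [h3]
  rw [e1, e2, e3]
  field_simp
  ring
end

section
/- Let A, B, C, D be four pairwise distinct points in ℝ³. Then the three positive real numbers dist(A,B)·dist(C,D), dist(A,C)·dist(B,D), dist(A,D)·dist(B,C) satisfy all three triangle inequalities; that is, each of these three numbers is at most the sum of the other two. (Hence there exists a, possibly degenerate, triangle with these side lengths.) -/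
/-- For four pairwise distinct points `A, B, C, D` in `ℝ³`, the three numbers
`AB·CD`, `AC·BD`, `AD·BC` satisfy all three triangle inequalities. -/
theorem crelle_triangle_inequalities (A B C D : EuclideanSpace ℝ (Fin 3))
    (hAB : A ≠ B) (hAC : A ≠ C) (hAD : A ≠ D) (hBC : B ≠ C) (hBD : B ≠ D) (hCD : C ≠ D) :
    dist A B * dist C D ≤ dist A C * dist B D + dist A D * dist B C ∧
    dist A C * dist B D ≤ dist A B * dist C D + dist A D * dist B C ∧
    dist A D * dist B C ≤ dist A B * dist C D + dist A C * dist B D := by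
  have h1 := EuclideanGeometry.mul_dist_le_mul_dist_add_mul_dist A C B D
  have h2 := EuclideanGeometry.mul_dist_le_mul_dist_add_mul_dist A B C D
  have h3 := EuclideanGeometry.mul_dist_le_mul_dist_add_mul_dist A B D C
  simp only [dist_comm C B, dist_comm D B, dist_comm D C] at *
  refine ⟨by linarith, by linarith, by linarith⟩
end

section
/- Let x₁, x₂, x₃, x₄ be the vertices, listed in cyclic order, of a strictly convex quadrilateral in the Euclidean plane, and for {i, j, k, l} = {1, 2, 3, 4} let α_{i,j} denote the angle ∠x_k x_i x_l (the angle at vertex x_i subtended by the segment joining the two points other than x_i and x_j). Assume α_{1,3} + α_{3,1} ≤ π. Then the multiset of angles of any triangle with side lengths dist(x₁,x₂)·dist(x₃,x₄), dist(x₁,x₃)·dist(x₂,x₄), dist(x₁,x₄)·dist(x₂,x₃) is {α_{2,3} - α_{3,2}, α_{2,1} - α_{1,2}, α_{1,3} + α_{3,1}}; i.e., there exist points P, Q, R in the plane whose pairwise distances are (in some order) these three products and whose angles are exactly α_{2,3} - α_{3,2}, α_{2,1} - α_{1,2}, and α_{1,3} + α_{3,1}. -/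
/-!
Identify the plane with `ℂ` and put `u = (x₁ - x₂)(x₃ - x₄)`, `v = (x₁ - x₃)(x₂ - x₄)`. Since
`v - u = (x₁ - x₄)(x₂ - x₃)`, the triangle `0 u v` has the three products as side lengths. Its
angles are the absolute values of the arguments of `u / v`, `(v - u) / (-u)` and `v / (v - u)`,
and each of these quotients is a product of two quotients of edge vectors at vertices of the
quadrilateral. For a counterclockwise quadrilateral (conjugate otherwise) the arguments of those
are `±` the angles `α_{i,j}`, and they add up without wrapping around because `α₁₃ + α₃₁ ≤ π`.
The three quotients have imaginary parts of the same sign, so no absolute value flips a sign.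
A triangle's angles are determined by the multiset of its side lengths (law of cosines), so
every triangle with these side lengths has the same angles as `0 u v`.
-/

open EuclideanGeometry ComplexConjugate

/-- A strictly convex quadrilateral `x₁x₂x₃x₄` in the plane: no three vertices are collinear,
each vertex lies outside the convex hull of the other three, and the vertices are listed in
cyclic order (equivalently, the diagonals `x₁x₃` and `x₂x₄` meet). -/
def IsStrictConvexQuad (x₁ x₂ x₃ x₄ : EuclideanSpace ℝ (Fin 2)) : Prop :=
  ¬ Collinear ℝ ({x₁, x₂, x₃} : Set (EuclideanSpace ℝ (Fin 2))) ∧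
  ¬ Collinear ℝ ({x₁, x₂, x₄} : Set (EuclideanSpace ℝ (Fin 2))) ∧
  ¬ Collinear ℝ ({x₁, x₃, x₄} : Set (EuclideanSpace ℝ (Fin 2))) ∧
  ¬ Collinear ℝ ({x₂, x₃, x₄} : Set (EuclideanSpace ℝ (Fin 2))) ∧
  x₁ ∉ convexHull ℝ ({x₂, x₃, x₄} : Set (EuclideanSpace ℝ (Fin 2))) ∧
  x₂ ∉ convexHull ℝ ({x₁, x₃, x₄} : Set (EuclideanSpace ℝ (Fin 2))) ∧
  x₃ ∉ convexHull ℝ ({x₁, x₂, x₄} : Set (EuclideanSpace ℝ (Fin 2))) ∧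
  x₄ ∉ convexHull ℝ ({x₁, x₂, x₃} : Set (EuclideanSpace ℝ (Fin 2))) ∧
  (segment ℝ x₁ x₃ ∩ segment ℝ x₂ x₄).Nonempty

theorem mul_neg_of_convex_combination_eq_zero {x y t : ℝ} (ht₀ : 0 ≤ t) (ht₁ : t ≤ 1)
    (hx : x ≠ 0) (hy : y ≠ 0) (h : (1 - t) * x + t * y = 0) : x * y < 0 := by
  have ht : 0 < t := ht₀.lt_of_ne (by rintro rfl; simp_all)
  have ht' : t < 1 := ht₁.lt_of_ne (by rintro rfl; simp_all)
  have : (1 - t) * (x * y) = -(t * y ^ 2) := by linear_combination y * h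
  nlinarith [sq_pos_of_ne_zero hy]

theorem AffineEquiv.collinear_map_iff {k V₁ P₁ V₂ P₂ : Type*} [DivisionRing k]
    [AddCommGroup V₁] [Module k V₁] [AddTorsor V₁ P₁] [AddCommGroup V₂] [Module k V₂]
    [AddTorsor V₂ P₂] (e : P₁ ≃ᵃ[k] P₂) {p₁ p₂ p₃ : P₁} :
    Collinear k {e p₁, e p₂, e p₃} ↔ Collinear k {p₁, p₂, p₃} := by
  rw [collinear_iff_not_affineIndependent_set, collinear_iff_not_affineIndependent_set,
    ← e.affineIndependent_iff, ← FinVec.map_eq]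
  rfl

theorem LinearEquiv.segment_inter_nonempty_map_iff {E F : Type*} [AddCommGroup E] [Module ℝ E]
    [AddCommGroup F] [Module ℝ F] (e : E ≃ₗ[ℝ] F) {a b c d : E} :
    (segment ℝ (e a) (e c) ∩ segment ℝ (e b) (e d)).Nonempty ↔
      (segment ℝ a c ∩ segment ℝ b d).Nonempty := by
  have h := image_segment ℝ e.toLinearMap.toAffineMap
  simp only [LinearMap.coe_toAffineMap, LinearEquiv.coe_coe] at h
  rw [← h, ← h, ← Set.image_inter e.injective, Set.image_nonempty]

theorem EuclideanGeometry.angle_map_linearIsometryEquiv {V V₂ : Type*} [NormedAddCommGroup V]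
    [InnerProductSpace ℝ V] [NormedAddCommGroup V₂] [InnerProductSpace ℝ V₂] (f : V ≃ₗᵢ[ℝ] V₂)
    (p q r : V) : ∠ (f p) (f q) (f r) = ∠ p q r :=
  f.toAffineIsometryEquiv.toAffineIsometry.angle_map p q r

section SideLengths

variable {V P V₂ P₂ : Type*} [NormedAddCommGroup V] [InnerProductSpace ℝ V] [MetricSpace P]
  [NormedAddTorsor V P] [NormedAddCommGroup V₂] [InnerProductSpace ℝ V₂] [MetricSpace P₂]
  [NormedAddTorsor V₂ P₂]

/-- The law of cosines `cos γ = (a² + b² - c²) / (2ab)`, rewritten so that it only depends on the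
multiset `S = {a, b, c}` of side lengths and on the opposite side `t = c`. -/
noncomputable def oppositeAngle (S : Multiset ℝ) (t : ℝ) : ℝ :=
  Real.arccos (((S.map (· ^ 2)).sum - 2 * t ^ 2) * t / (2 * S.prod))

theorem angle_eq_oppositeAngle {p q r : P} (hpq : p ≠ q) (hpr : p ≠ r) (hqr : q ≠ r) :
    ∠ p r q = oppositeAngle {dist p q, dist p r, dist q r} (dist p q) := by
  have := dist_pos.2 hpq
  have := dist_pos.2 hpr
  have := dist_pos.2 hqr
  rw [oppositeAngle, ← Real.arccos_cos (angle_nonneg p r q) (angle_le_pi p r q)]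
  congr 1
  simp only [Multiset.insert_eq_cons, Multiset.map_cons, Multiset.map_singleton,
    Multiset.sum_cons, Multiset.sum_singleton, Multiset.prod_cons, Multiset.prod_singleton]
  field_simp
  linear_combination law_cos p r q

theorem angles_eq_map_oppositeAngle {p q r : P} (hpq : p ≠ q) (hpr : p ≠ r) (hqr : q ≠ r) :
    ({∠ q p r, ∠ p q r, ∠ p r q} : Multiset ℝ) =
      ({dist p q, dist p r, dist q r} : Multiset ℝ).map
        (oppositeAngle {dist p q, dist p r, dist q r}) := by
  rw [angle_eq_oppositeAngle hqr hpq.symm hpr.symm, angle_eq_oppositeAngle hpr hpq hqr.symm,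
    angle_eq_oppositeAngle hpq hpr hqr]
  simp only [dist_comm, Multiset.insert_eq_cons, ← Multiset.cons_zero, Multiset.cons_swap,
    Multiset.map_cons, Multiset.map_zero]

theorem angles_eq_of_dists_eq {p q r : P} {p' q' r' : P₂} (hpq' : p' ≠ q') (hpr' : p' ≠ r')
    (hqr' : q' ≠ r')
    (h : ({dist p q, dist p r, dist q r} : Multiset ℝ) = {dist p' q', dist p' r', dist q' r'}) :
    ({∠ q p r, ∠ p q r, ∠ p r q} : Multiset ℝ) = {∠ q' p' r', ∠ p' q' r', ∠ p' r' q'} := by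
  have hpos : ∀ x ∈ ({dist p q, dist p r, dist q r} : Multiset ℝ), 0 < x := by
    rw [h]
    simp [hpq', hpr', hqr']
  have hpq : p ≠ q := dist_pos.1 (hpos _ (by simp))
  have hpr : p ≠ r := dist_pos.1 (hpos _ (by simp))
  have hqr : q ≠ r := dist_pos.1 (hpos _ (by simp))
  rw [angles_eq_map_oppositeAngle hpq hpr hqr, angles_eq_map_oppositeAngle hpq' hpr' hqr', h]

end SideLengths

namespace Complex

def cross (z w : ℂ) : ℝ := z.re * w.im - z.im * w.re

theorem cross_swap (z w : ℂ) : cross w z = -cross z w := by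
  unfold cross; ring

theorem cross_sub_rotate (p q r : ℂ) : cross (r - q) (p - q) = cross (q - p) (r - p) := by
  simp only [cross, sub_re, sub_im]; ring

theorem cross_conj (z w : ℂ) : cross (conj z) (conj w) = -cross z w := by
  simp only [cross, conj_re, conj_im]; ring

theorem cross_smul_add_smul (z w w' : ℂ) (s t : ℝ) :
    cross z (s • w + t • w') = s * cross z w + t * cross z w' := by
  simp only [cross, add_re, add_im, smul_re, smul_im, smul_eq_mul]; ring

theorem cross_smul_self (z : ℂ) (s : ℝ) : cross z (s • z) = 0 := by
  simp only [cross, smul_re, smul_im, smul_eq_mul]; ring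

theorem im_div_eq_cross_div_normSq (z w : ℂ) : (w / z).im = cross z w / normSq z := by
  rw [div_im, cross]; ring

theorem im_div_nonneg_iff {z w : ℂ} (hz : z ≠ 0) : 0 ≤ (w / z).im ↔ 0 ≤ cross z w := by
  rw [im_div_eq_cross_div_normSq, le_div_iff₀ (normSq_pos.2 hz), zero_mul]

theorem ne_of_cross_sub_ne_zero {p q r : ℂ} (h : cross (q - p) (r - p) ≠ 0) :
    q ≠ p ∧ r ≠ p := by
  constructor <;> rintro rfl <;> simp [cross] at h

theorem cross_sub_ne_zero_of_not_collinear {p q r : ℂ} (h : ¬Collinear ℝ {p, q, r}) :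
    cross (q - p) (r - p) ≠ 0 := by
  intro h0
  apply h
  have hqp : q - p ≠ 0 := sub_ne_zero.2 (ne₁₂_of_not_collinear h).symm
  set t := ((r - p) / (q - p)).re
  have hreal : (r - p) / (q - p) = t :=
    Complex.ext rfl (by simp [im_div_eq_cross_div_normSq, h0])
  have hr : r = AffineMap.lineMap p q t := by
    rw [AffineMap.lineMap_apply_module', real_smul, ← hreal, div_mul_cancel₀ _ hqp]
    ring
  rw [Set.pair_comm q r, Set.insert_comm p r, hr]
  exact collinear_insert_of_mem_affineSpan_pair (AffineMap.lineMap_mem_affineSpan_pair _ _ _)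

theorem cross_mul_cross_neg_of_segment_inter_nonempty {a b c d : ℂ}
    (h : (segment ℝ a c ∩ segment ℝ b d).Nonempty) (hb : cross (c - a) (b - a) ≠ 0)
    (hd : cross (c - a) (d - a) ≠ 0) : cross (c - a) (b - a) * cross (c - a) (d - a) < 0 := by
  obtain ⟨m, hac, hbd⟩ := h
  rw [segment_eq_image'] at hac hbd
  obtain ⟨s, -, rfl⟩ := hac
  obtain ⟨t, ⟨ht₀, ht₁⟩, hm⟩ := hbd
  refine mul_neg_of_convex_combination_eq_zero ht₀ ht₁ hb hd ?_
  have : (1 - t) • (b - a) + t • (d - a) = s • (c - a) := by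
    simp only [real_smul, ofReal_sub, ofReal_one] at hm ⊢
    linear_combination hm
  rw [← cross_smul_add_smul, this, cross_smul_self]

theorem ccw_or_cw_of_diagonals_separate {a b c d : ℂ}
    (hac : cross (c - a) (b - a) * cross (c - a) (d - a) < 0)
    (hbd : cross (d - b) (a - b) * cross (d - b) (c - b) < 0) :
    (0 < cross (b - a) (d - a) ∧ 0 < cross (c - a) (d - a) ∧ 0 < cross (c - b) (d - b)) ∨
      (cross (b - a) (d - a) < 0 ∧ cross (c - a) (d - a) < 0 ∧ cross (c - b) (d - b) < 0) := by
  rw [cross_swap (b - a) (c - a), neg_mul, neg_lt_zero] at hac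
  rw [cross_sub_rotate a b d, cross_swap (c - b) (d - b), mul_neg, neg_lt_zero] at hbd
  -- twice the signed area of `abcd`, computed from the diagonal `ac` and from the diagonal `bd`
  have harea : cross (b - a) (c - a) + cross (c - a) (d - a) =
      cross (b - a) (d - a) + cross (c - b) (d - b) := by
    simp only [cross, sub_re, sub_im]; ring
  rcases mul_pos_iff.1 hac with ⟨habc, hacd⟩ | ⟨habc, hacd⟩ <;>
  rcases mul_pos_iff.1 hbd with ⟨habd, hbcd⟩ | ⟨habd, hbcd⟩
  · exact Or.inl ⟨habd, hacd, hbcd⟩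
  · linarith
  · linarith
  · exact Or.inr ⟨habd, hacd, hbcd⟩

theorem angle_eq_abs_arg_div {p q r : ℂ} (hq : q ≠ p) (hr : r ≠ p) :
    ∠ r p q = |((r - p) / (q - p)).arg| :=
  angle_eq_abs_arg (sub_ne_zero.2 hr) (sub_ne_zero.2 hq)

theorem angle_conj (p q r : ℂ) : ∠ (conj p) (conj q) (conj r) = ∠ p q r :=
  angle_map_linearIsometryEquiv conjLIE p q r

theorem arg_div_eq_angle_of_cross_pos {p q r : ℂ} (h : 0 < cross (q - p) (r - p)) :
    ((r - p) / (q - p)).arg = ∠ r p q := by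
  obtain ⟨hq, hr⟩ := ne_of_cross_sub_ne_zero h.ne'
  have him : 0 < ((r - p) / (q - p)).im := by
    rw [im_div_eq_cross_div_normSq]
    exact div_pos h (normSq_pos.2 (sub_ne_zero.2 hq))
  rw [angle_eq_abs_arg_div hq hr, abs_of_nonneg (arg_nonneg_iff.2 him.le)]

theorem arg_div_eq_neg_angle_of_cross_neg {p q r : ℂ} (h : cross (q - p) (r - p) < 0) :
    ((r - p) / (q - p)).arg = -∠ r p q := by
  obtain ⟨hq, hr⟩ := ne_of_cross_sub_ne_zero h.ne
  have him : ((r - p) / (q - p)).im < 0 := by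
    rw [im_div_eq_cross_div_normSq]
    exact div_neg_of_neg_of_pos h (normSq_pos.2 (sub_ne_zero.2 hq))
  rw [angle_eq_abs_arg_div hq hr, abs_of_neg (arg_neg_iff.2 him), neg_neg]

theorem arg_mul_eq_angle_add_angle {p q r p' q' r' : ℂ} (h : 0 < cross (q - p) (r - p))
    (h' : 0 < cross (q' - p') (r' - p')) (hle : ∠ r p q + ∠ r' p' q' ≤ Real.pi) :
    ((r - p) / (q - p) * ((r' - p') / (q' - p'))).arg = ∠ r p q + ∠ r' p' q' := by
  obtain ⟨hq, hr⟩ := ne_of_cross_sub_ne_zero h.ne'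
  obtain ⟨hq', hr'⟩ := ne_of_cross_sub_ne_zero h'.ne'
  have hx := arg_div_eq_angle_of_cross_pos h
  have hy := arg_div_eq_angle_of_cross_pos h'
  rw [arg_mul (div_ne_zero (sub_ne_zero.2 hr) (sub_ne_zero.2 hq))
    (div_ne_zero (sub_ne_zero.2 hr') (sub_ne_zero.2 hq')), hx, hy]
  rw [hx, hy]
  exact ⟨by linarith [angle_nonneg r p q, angle_nonneg r' p' q', Real.pi_pos], hle⟩

theorem arg_mul_eq_angle_sub_angle {p q r p' q' r' : ℂ} (h : 0 < cross (q - p) (r - p))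
    (h' : cross (q' - p') (r' - p') < 0) :
    ((r - p) / (q - p) * ((r' - p') / (q' - p'))).arg = ∠ r p q - ∠ r' p' q' := by
  obtain ⟨hq, hr⟩ := ne_of_cross_sub_ne_zero h.ne'
  obtain ⟨hq', hr'⟩ := ne_of_cross_sub_ne_zero h'.ne
  have hx := arg_div_eq_angle_of_cross_pos h
  have hy := arg_div_eq_neg_angle_of_cross_neg h'
  rw [arg_mul (div_ne_zero (sub_ne_zero.2 hr) (sub_ne_zero.2 hq))
    (div_ne_zero (sub_ne_zero.2 hr') (sub_ne_zero.2 hq')), hx, hy, sub_eq_add_neg]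
  constructor
  · linarith [neg_pi_lt_arg ((r' - p') / (q' - p')), angle_nonneg r p q]
  · linarith [angle_le_pi r p q, angle_nonneg r' p' q']

theorem angles_eq_args_of_im_nonneg {u v : ℂ} (hu : u ≠ 0) (hv : v ≠ 0) (huv : u ≠ v)
    (h : 0 ≤ ((v - u) / -u).im) :
    ∠ u 0 v = (u / v).arg ∧ ∠ 0 u v = ((v - u) / -u).arg ∧ ∠ 0 v u = (v / (v - u)).arg := by
  have hvu : v - u ≠ 0 := sub_ne_zero.2 huv.symm
  have hc : 0 ≤ cross v u := by
    rwa [im_div_nonneg_iff (neg_ne_zero.2 hu), show cross (-u) (v - u) = cross v u by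
      simp only [cross, neg_re, neg_im, sub_re, sub_im]; ring] at h
  refine ⟨?_, ?_, ?_⟩
  · rw [angle_eq_abs_arg_div hv hu, sub_zero, sub_zero,
      abs_of_nonneg (arg_nonneg_iff.2 ((im_div_nonneg_iff hv).2 hc))]
  · rw [angle_comm, angle_eq_abs_arg_div (Ne.symm hu) huv.symm, zero_sub,
      abs_of_nonneg (arg_nonneg_iff.2 h)]
  · rw [angle_eq_abs_arg_div huv (Ne.symm hv), zero_sub, ← neg_sub v u, neg_div_neg_eq,
      abs_of_nonneg (arg_nonneg_iff.2 ((im_div_nonneg_iff hvu).2 ?_))]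
    rwa [show cross (v - u) v = cross v u by simp only [cross, sub_re, sub_im]; ring]

theorem crelle_angles_of_ccw {a b c d : ℂ} (habd : 0 < cross (b - a) (d - a))
    (hacd : 0 < cross (c - a) (d - a)) (hbcd : 0 < cross (c - b) (d - b))
    (hangle : ∠ b a d + ∠ b c d ≤ Real.pi) :
    ∠ ((a - b) * (c - d)) 0 ((a - c) * (b - d)) = ∠ a b d - ∠ a c d ∧
    ∠ 0 ((a - b) * (c - d)) ((a - c) * (b - d)) = ∠ b a d + ∠ b c d ∧
    ∠ 0 ((a - c) * (b - d)) ((a - b) * (c - d)) = ∠ c b d - ∠ c a d := by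
  have hcdb : 0 < cross (d - c) (b - c) := by rwa [cross_sub_rotate]
  have hbda : 0 < cross (d - b) (a - b) := by rwa [cross_sub_rotate]
  have hcad : cross (a - c) (d - c) < 0 := by rw [cross_swap, cross_sub_rotate]; linarith
  have hadc : cross (d - a) (c - a) < 0 := by rw [cross_swap]; linarith
  obtain ⟨hba, hda⟩ := ne_of_cross_sub_ne_zero habd.ne'
  obtain ⟨hcb, hdb⟩ := ne_of_cross_sub_ne_zero hbcd.ne'
  obtain ⟨hdc, -⟩ := ne_of_cross_sub_ne_zero hcdb.ne'
  obtain ⟨hac, -⟩ := ne_of_cross_sub_ne_zero hcad.ne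
  set u := (a - b) * (c - d)
  set v := (a - c) * (b - d)
  have hu : u ≠ 0 := mul_ne_zero (sub_ne_zero.2 hba.symm) (sub_ne_zero.2 hdc.symm)
  have hv : v ≠ 0 := mul_ne_zero (sub_ne_zero.2 hac) (sub_ne_zero.2 hdb.symm)
  have hvu : v - u = (a - d) * (b - c) := by ring
  have hw : v - u ≠ 0 := hvu ▸ mul_ne_zero (sub_ne_zero.2 hda.symm) (sub_ne_zero.2 hcb.symm)
  have hP : (u / v).arg = ∠ a b d - ∠ a c d := by
    rw [show u / v = (a - b) / (d - b) * ((d - c) / (a - c)) by field_simp; ring,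
      arg_mul_eq_angle_sub_angle hbda hcad, angle_comm d c a]
  have hQ : ((v - u) / -u).arg = ∠ b a d + ∠ b c d := by
    rw [show (v - u) / -u = (d - a) / (b - a) * ((b - c) / (d - c)) by field_simp; ring,
      arg_mul_eq_angle_add_angle habd hcdb (by rwa [angle_comm d a b]), angle_comm d a b]
  have hR : (v / (v - u)).arg = ∠ c b d - ∠ c a d := by
    rw [show v / (v - u) = (d - b) / (c - b) * ((c - a) / (d - a)) by field_simp; ring,
      arg_mul_eq_angle_sub_angle hbcd hadc, angle_comm d b c]
  have him : 0 ≤ ((v - u) / -u).im :=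
    arg_nonneg_iff.1 (hQ ▸ add_nonneg (angle_nonneg b a d) (angle_nonneg b c d))
  obtain ⟨e₁, e₂, e₃⟩ := angles_eq_args_of_im_nonneg hu hv (sub_ne_zero.1 hw).symm him
  exact ⟨e₁.trans hP, e₂.trans hQ, e₃.trans hR⟩

theorem crelle_angles {a b c d : ℂ} (habc : ¬Collinear ℝ {a, b, c})
    (habd : ¬Collinear ℝ {a, b, d}) (hacd : ¬Collinear ℝ {a, c, d})
    (hbcd : ¬Collinear ℝ {b, c, d}) (hdiag : (segment ℝ a c ∩ segment ℝ b d).Nonempty)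
    (hangle : ∠ b a d + ∠ b c d ≤ Real.pi) :
    ∠ ((a - b) * (c - d)) 0 ((a - c) * (b - d)) = ∠ a b d - ∠ a c d ∧
    ∠ 0 ((a - b) * (c - d)) ((a - c) * (b - d)) = ∠ b a d + ∠ b c d ∧
    ∠ 0 ((a - c) * (b - d)) ((a - b) * (c - d)) = ∠ c b d - ∠ c a d := by
  have hac := cross_mul_cross_neg_of_segment_inter_nonempty hdiag
    (cross_sub_ne_zero_of_not_collinear (by rwa [Set.pair_comm]))
    (cross_sub_ne_zero_of_not_collinear hacd)
  have hbd := cross_mul_cross_neg_of_segment_inter_nonempty (Set.inter_comm _ _ ▸ hdiag)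
    (cross_sub_ne_zero_of_not_collinear (by rwa [Set.pair_comm d a, Set.insert_comm b a]))
    (cross_sub_ne_zero_of_not_collinear (by rwa [Set.pair_comm]))
  rcases ccw_or_cw_of_diagonals_separate hac hbd with ⟨h₁, h₂, h₃⟩ | ⟨h₁, h₂, h₃⟩
  · exact crelle_angles_of_ccw h₁ h₂ h₃ hangle
  · have h := crelle_angles_of_ccw (a := conj a) (b := conj b) (c := conj c) (d := conj d)
      (by rw [← map_sub, ← map_sub, cross_conj]; linarith)
      (by rw [← map_sub, ← map_sub, cross_conj]; linarith)
      (by rw [← map_sub, ← map_sub, cross_conj]; linarith)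
      (by rwa [angle_conj, angle_conj])
    simp only [← map_sub, ← map_mul] at h
    rw [← map_zero (starRingEnd ℂ)] at h
    simpa only [angle_conj] using h

theorem dist_crelle (a b c d : ℂ) :
    dist 0 ((a - b) * (c - d)) = dist a b * dist c d ∧
    dist 0 ((a - c) * (b - d)) = dist a c * dist b d ∧
    dist ((a - b) * (c - d)) ((a - c) * (b - d)) = dist a d * dist b c := by
  refine ⟨?_, ?_, ?_⟩ <;> rw [dist_comm] <;> simp only [dist_eq, sub_zero, norm_mul]
  rw [show (a - c) * (b - d) - (a - b) * (c - d) = (a - d) * (b - c) by ring, norm_mul]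

end Complex

/-- For a strictly convex quadrilateral `x₁x₂x₃x₄` with `α₁₃ + α₃₁ ≤ π`, the Crelle triangle
(with side lengths `x₁x₂·x₃x₄`, `x₁x₃·x₂x₄`, `x₁x₄·x₂x₃`) exists and its angles are
`α₂₃ - α₃₂`, `α₂₁ - α₁₂`, `α₁₃ + α₃₁`. -/
theorem crelle_triangle_angles_convex_quad (x₁ x₂ x₃ x₄ : EuclideanSpace ℝ (Fin 2))
    (h : IsStrictConvexQuad x₁ x₂ x₃ x₄)
    (hangle : ∠ x₂ x₁ x₄ + ∠ x₂ x₃ x₄ ≤ Real.pi) :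
    (∃ P Q R : EuclideanSpace ℝ (Fin 2),
      ({dist P Q, dist P R, dist Q R} : Multiset ℝ) =
        ({dist x₁ x₂ * dist x₃ x₄, dist x₁ x₃ * dist x₂ x₄, dist x₁ x₄ * dist x₂ x₃} : Multiset ℝ)) ∧
    ∀ P Q R : EuclideanSpace ℝ (Fin 2),
      ({dist P Q, dist P R, dist Q R} : Multiset ℝ) =
        ({dist x₁ x₂ * dist x₃ x₄, dist x₁ x₃ * dist x₂ x₄, dist x₁ x₄ * dist x₂ x₃} : Multiset ℝ) →
      ({∠ Q P R, ∠ P Q R, ∠ P R Q} : Multiset ℝ) =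
        ({∠ x₁ x₂ x₄ - ∠ x₁ x₃ x₄, ∠ x₃ x₂ x₄ - ∠ x₃ x₁ x₄, ∠ x₂ x₁ x₄ + ∠ x₂ x₃ x₄} : Multiset ℝ) := by
  obtain ⟨h₁₂₃, h₁₂₄, h₁₃₄, h₂₃₄, -, -, -, -, hdiag⟩ := h
  let f := Complex.isometryOfOrthonormal (EuclideanSpace.basisFun (Fin 2) ℝ)
  let e := f.toLinearEquiv.toAffineEquiv
  obtain ⟨a, rfl⟩ := f.surjective x₁
  obtain ⟨b, rfl⟩ := f.surjective x₂
  obtain ⟨c, rfl⟩ := f.surjective x₃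
  obtain ⟨d, rfl⟩ := f.surjective x₄
  have habc := e.collinear_map_iff.not.1 h₁₂₃
  have habd := e.collinear_map_iff.not.1 h₁₂₄
  have hbcd := e.collinear_map_iff.not.1 h₂₃₄
  simp only [f.dist_map, angle_map_linearIsometryEquiv] at hangle ⊢
  obtain ⟨hP, hQ, hR⟩ := Complex.crelle_angles habc habd (e.collinear_map_iff.not.1 h₁₃₄) hbcd
    (f.toLinearEquiv.segment_inter_nonempty_map_iff.1 hdiag) hangle
  obtain ⟨dP, dQ, dR⟩ := Complex.dist_crelle a b c d
  set u := (a - b) * (c - d)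
  set v := (a - c) * (b - d)
  have hsides : ({dist 0 u, dist 0 v, dist u v} : Multiset ℝ) =
      {dist a b * dist c d, dist a c * dist b d, dist a d * dist b c} := by
    rw [dP, dQ, dR]
  refine ⟨⟨f 0, f u, f v, by simpa only [f.dist_map] using hsides⟩, fun P Q R hPQR => ?_⟩
  have h0u : (0 : ℂ) ≠ u := dist_pos.1 (dP ▸ mul_pos (dist_pos.2 (ne₁₂_of_not_collinear habc))
    (dist_pos.2 (ne₂₃_of_not_collinear hbcd)))
  have h0v : (0 : ℂ) ≠ v := dist_pos.1 (dQ ▸ mul_pos (dist_pos.2 (ne₁₃_of_not_collinear habc))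
    (dist_pos.2 (ne₂₃_of_not_collinear habd)))
  have huv : u ≠ v := dist_pos.1 (dR ▸ mul_pos (dist_pos.2 (ne₁₃_of_not_collinear habd))
    (dist_pos.2 (ne₂₃_of_not_collinear habc)))
  rw [angles_eq_of_dists_eq h0u h0v huv (hPQR.trans hsides.symm), hP, hQ, hR]
  simp only [Multiset.insert_eq_cons, ← Multiset.cons_zero, Multiset.cons_swap]
end

section
/- Define f(u, w, x, y, z) = cos u + cos w + cos x + cos y + cos z - cos(u+y+z) - cos(x+y+z) + cos(-w+y+z) + cos(u+w) + cos(x+y) - cos(u+y) - cos(w+x) + cos(u+x+y+z) - cos(-w+z) - cos(u+w+x+y). Then f(u, w, x, y, z) ≥ 3 for all non-negative real numbers u, w, x, y, z satisfying w ≤ z, x + w ≤ π, u + w + x + y + z ≤ 2π, u + x + y + z ≤ π, and u + y + z ≤ π. -/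
set_option maxHeartbeats 1000000


open Real

/-- `cos A + cos B - cos (A + B) = 1 + 4 sin(A/2) sin(B/2) cos((A+B)/2)`. -/
lemma quad_aux (a b : ℝ) :
    Real.cos (2 * a) + Real.cos (2 * b) - Real.cos (2 * a + 2 * b) =
      1 + 4 * (Real.sin a * Real.sin b * Real.cos (a + b)) := by
  rw [show 2 * a + 2 * b = 2 * (a + b) by ring, Real.cos_two_mul, Real.cos_two_mul,
    Real.cos_two_mul, Real.cos_add]
  linear_combination (2 * Real.sin b ^ 2) * Real.sin_sq_add_cos_sq a +
    (2 - 2 * Real.cos a ^ 2) * Real.sin_sq_add_cos_sq b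

lemma quad (A B : ℝ) :
    Real.cos A + Real.cos B - Real.cos (A + B) =
      1 + 4 * (Real.sin (A / 2) * Real.sin (B / 2) * Real.cos (A / 2 + B / 2)) := by
  have h := quad_aux (A / 2) (B / 2)
  rwa [show 2 * (A / 2) = A by ring, show 2 * (B / 2) = B by ring] at h

/-- The trigonometric inequality `f(u,w,x,y,z) ≥ 3` of Mazur–Petrenko. -/
theorem trig_inequality (u w x y z : ℝ)
    (hu : 0 ≤ u) (hw : 0 ≤ w) (hx : 0 ≤ x) (hy : 0 ≤ y) (hz : 0 ≤ z)
    (hwz : w ≤ z) (hxw : x + w ≤ π)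
    (hsum : u + w + x + y + z ≤ 2 * π)
    (huxyz : u + x + y + z ≤ π)
    (huyz : u + y + z ≤ π) :
    3 ≤ cos u + cos w + cos x + cos y + cos z - cos (u + y + z) - cos (x + y + z) +
        cos (-w + y + z) + cos (u + w) + cos (x + y) - cos (u + y) - cos (w + x) +
        cos (u + x + y + z) - cos (-w + z) - cos (u + w + x + y) := by
  have pi_pos := Real.pi_pos
  -- the five quadruple identities
  have h1 := quad u y
  have h2 := quad w x
  have h3 := quad (x + y) z
  have h4 := quad (u + w) (y + z - w)
  have h5 := quad (u + w + x + y) (z - w)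
  rw [show u + w + (y + z - w) = u + y + z by ring,
      show (u + w) / 2 + (y + z - w) / 2 = (u + y + z) / 2 by ring] at h4
  rw [show u + w + x + y + (z - w) = u + x + y + z by ring,
      show (u + w + x + y) / 2 + (z - w) / 2 = (u + x + y + z) / 2 by ring,
      show (u + w + x + y) / 2 = (u + w) / 2 + (x + y) / 2 by ring,
      Real.sin_add] at h5
  rw [show -w + y + z = y + z - w by ring, show -w + z = z - w by ring]
  -- abbreviations
  set T1 := sin (u / 2) * sin (y / 2) * cos (u / 2 + y / 2) with hT1
  set T2 := sin (w / 2) * sin (x / 2) * cos (w / 2 + x / 2) with hT2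
  set T3 := sin ((x + y) / 2) * sin (z / 2) * cos ((x + y) / 2 + z / 2) with hT3
  set T4 := sin ((u + w) / 2) * sin ((y + z - w) / 2) * cos ((u + y + z) / 2) with hT4
  -- nonnegativity facts
  have hs_uw : (0:ℝ) ≤ sin ((u + w) / 2) :=
    sin_nonneg_of_nonneg_of_le_pi (by linarith) (by linarith)
  have hs_xy : (0:ℝ) ≤ sin ((x + y) / 2) :=
    sin_nonneg_of_nonneg_of_le_pi (by linarith) (by linarith)
  have hs_zw : (0:ℝ) ≤ sin ((z - w) / 2) :=
    sin_nonneg_of_nonneg_of_le_pi (by linarith) (by linarith)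
  have hs_yzw : (0:ℝ) ≤ sin ((y + z - w) / 2) :=
    sin_nonneg_of_nonneg_of_le_pi (by linarith) (by linarith)
  have hc_xy : (0:ℝ) ≤ cos ((x + y) / 2) :=
    cos_nonneg_of_mem_Icc ⟨by linarith, by linarith⟩
  have hc_uw : (0:ℝ) ≤ cos ((u + w) / 2) :=
    cos_nonneg_of_mem_Icc ⟨by linarith, by linarith⟩
  have hc_uyz : (0:ℝ) ≤ cos ((u + y + z) / 2) :=
    cos_nonneg_of_mem_Icc ⟨by linarith, by linarith⟩
  have hc_uxyz : (0:ℝ) ≤ cos ((u + x + y + z) / 2) :=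
    cos_nonneg_of_mem_Icc ⟨by linarith, by linarith⟩
  have hc_xyz : (0:ℝ) ≤ cos ((x + y) / 2 + z / 2) :=
    cos_nonneg_of_mem_Icc ⟨by linarith, by linarith⟩
  have hc_w : (0:ℝ) ≤ cos (w / 2) :=
    cos_nonneg_of_mem_Icc ⟨by linarith, by linarith⟩
  have hc_zw : (0:ℝ) ≤ cos ((z - w) / 2) :=
    cos_nonneg_of_mem_Icc ⟨by linarith, by linarith⟩
  have hs_w : (0:ℝ) ≤ sin (w / 2) :=
    sin_nonneg_of_nonneg_of_le_pi (by linarith) (by linarith)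
  have hs_z : (0:ℝ) ≤ sin (z / 2) :=
    sin_nonneg_of_nonneg_of_le_pi (by linarith) (by linarith)
  -- T1, T2 ≥ 0
  have hT1n : (0:ℝ) ≤ T1 := by
    apply mul_nonneg (mul_nonneg ?_ ?_) ?_
    · exact sin_nonneg_of_nonneg_of_le_pi (by linarith) (by linarith)
    · exact sin_nonneg_of_nonneg_of_le_pi (by linarith) (by linarith)
    · exact cos_nonneg_of_mem_Icc ⟨by linarith, by linarith⟩
  have hT2n : (0:ℝ) ≤ T2 := by
    apply mul_nonneg (mul_nonneg hs_w ?_) ?_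
    · exact sin_nonneg_of_nonneg_of_le_pi (by linarith) (by linarith)
    · exact cos_nonneg_of_mem_Icc ⟨by linarith, by linarith⟩
  -- monotonicity facts
  have hm1 : sin ((z - w) / 2) ≤ sin ((y + z - w) / 2) :=
    sin_le_sin_of_le_of_le_pi_div_two (by linarith) (by linarith) (by linarith)
  have hm2 : cos ((u + x + y + z) / 2) ≤ cos ((u + y + z) / 2) :=
    cos_le_cos_of_nonneg_of_le_pi (by linarith) (by linarith) (by linarith)
  have hm3 : cos ((u + x + y + z) / 2) ≤ cos ((x + y) / 2 + z / 2) :=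
    cos_le_cos_of_nonneg_of_le_pi (by linarith) (by linarith) (by linarith)
  have hm4 : cos ((u + w) / 2) ≤ cos (w / 2) :=
    cos_le_cos_of_nonneg_of_le_pi (by linarith) (by linarith) (by linarith)
  -- cos(w/2) * sin((z-w)/2) ≤ sin(z/2)
  have hm5 : cos (w / 2) * sin ((z - w) / 2) ≤ sin (z / 2) := by
    have hzsplit : z / 2 = (z - w) / 2 + w / 2 := by ring
    rw [hzsplit, Real.sin_add]
    nlinarith [mul_nonneg hc_zw hs_w]
  -- A1 ≤ T4
  have hA1 : sin ((u + w) / 2) * cos ((x + y) / 2) * (sin ((z - w) / 2) *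
      cos ((u + x + y + z) / 2)) ≤ T4 := by
    have step1 : sin ((z - w) / 2) * cos ((u + x + y + z) / 2) ≤
        sin ((y + z - w) / 2) * cos ((u + y + z) / 2) :=
      mul_le_mul hm1 hm2 (by positivity) hs_yzw
    have step2 : sin ((u + w) / 2) * cos ((x + y) / 2) ≤ sin ((u + w) / 2) := by
      nlinarith [Real.cos_le_one ((x + y) / 2)]
    calc sin ((u + w) / 2) * cos ((x + y) / 2) * (sin ((z - w) / 2) * cos ((u + x + y + z) / 2))
        ≤ sin ((u + w) / 2) * (sin ((y + z - w) / 2) * cos ((u + y + z) / 2)) := by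
          apply mul_le_mul step2 step1 (mul_nonneg hs_zw hc_uxyz) hs_uw
      _ = T4 := by rw [hT4]; ring
  -- A2 ≤ T3
  have hA2 : cos ((u + w) / 2) * sin ((x + y) / 2) * (sin ((z - w) / 2) *
      cos ((u + x + y + z) / 2)) ≤ T3 := by
    have step1 : cos ((u + w) / 2) * sin ((z - w) / 2) ≤ sin (z / 2) := by
      calc cos ((u + w) / 2) * sin ((z - w) / 2) ≤ cos (w / 2) * sin ((z - w) / 2) := by
            apply mul_le_mul_of_nonneg_right hm4 hs_zw
        _ ≤ sin (z / 2) := hm5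
    have h1' : cos ((u + w) / 2) * sin ((z - w) / 2) * cos ((u + x + y + z) / 2) ≤
        sin (z / 2) * cos ((x + y) / 2 + z / 2) := by
      apply mul_le_mul step1 hm3 hc_uxyz hs_z
    calc cos ((u + w) / 2) * sin ((x + y) / 2) * (sin ((z - w) / 2) * cos ((u + x + y + z) / 2))
        = sin ((x + y) / 2) * (cos ((u + w) / 2) * sin ((z - w) / 2) *
            cos ((u + x + y + z) / 2)) := by ring
      _ ≤ sin ((x + y) / 2) * (sin (z / 2) * cos ((x + y) / 2 + z / 2)) := by
          apply mul_le_mul_of_nonneg_left h1' hs_xy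
      _ = T3 := by rw [hT3]; ring
  -- conclude
  linarith [h1, h2, h3, h4, h5, hT1n, hT2n, hA1, hA2]
end

section
/- Let A₁, A₂, A₃, A₄ and B₁, B₂, B₃, B₄ be real numbers such that A_l ≥ B_l ≥ 0 for l = 1, 2, 3, 4 and A₁ + A₃ = A₂ + A₄ = B₁ + B₃ + 4 = B₂ + B₄ + 4. Then (16 + ∑_{l=1}^{4} (2 + A_l)·B_l)² ≥ ∏_{l=1}^{4} (B_l + 4). -/
/-- If `A_l ≥ B_l ≥ 0` and `A₁ + A₃ = A₂ + A₄ = B₁ + B₃ + 4 = B₂ + B₄ + 4`, then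
`(16 + ∑_l (2 + A_l)·B_l)² ≥ ∏_l (B_l + 4)`. -/
theorem inscribed_quad_algebraic_inequality
    (A₁ A₂ A₃ A₄ B₁ B₂ B₃ B₄ : ℝ)
    (h1 : A₁ ≥ B₁) (h2 : A₂ ≥ B₂) (h3 : A₃ ≥ B₃) (h4 : A₄ ≥ B₄)
    (hb1 : B₁ ≥ 0) (hb2 : B₂ ≥ 0) (hb3 : B₃ ≥ 0) (hb4 : B₄ ≥ 0)
    (hA : A₁ + A₃ = A₂ + A₄)
    (hAB : A₂ + A₄ = B₁ + B₃ + 4)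
    (hB : B₁ + B₃ + 4 = B₂ + B₄ + 4) :
    (16 + ((2 + A₁) * B₁ + (2 + A₂) * B₂ + (2 + A₃) * B₃ + (2 + A₄) * B₄)) ^ 2 ≥
      (B₁ + 4) * (B₂ + 4) * (B₃ + 4) * (B₄ + 4) := by
  set T : ℝ := 16 + ((2 + B₁) * B₁ + (2 + B₂) * B₂ + (2 + B₃) * B₃ + (2 + B₄) * B₄) with hT
  have hT0 : T ≥ 0 := by nlinarith
  have hLT : 16 + ((2 + A₁) * B₁ + (2 + A₂) * B₂ + (2 + A₃) * B₃ + (2 + A₄) * B₄) ≥ T := by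
    nlinarith [mul_nonneg (sub_nonneg.mpr h1) hb1, mul_nonneg (sub_nonneg.mpr h2) hb2,
      mul_nonneg (sub_nonneg.mpr h3) hb3, mul_nonneg (sub_nonneg.mpr h4) hb4]
  have h13 : (B₁ + 4) * (B₃ + 4) ≤ T := by nlinarith [sq_nonneg (B₁ - B₃), sq_nonneg B₂, sq_nonneg B₄]
  have h24 : (B₂ + 4) * (B₄ + 4) ≤ T := by nlinarith [sq_nonneg (B₂ - B₄), sq_nonneg B₁, sq_nonneg B₃]
  have hp13 : (0:ℝ) ≤ (B₁ + 4) * (B₃ + 4) := by positivity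
  have hp24 : (0:ℝ) ≤ (B₂ + 4) * (B₄ + 4) := by positivity
  calc (B₁ + 4) * (B₂ + 4) * (B₃ + 4) * (B₄ + 4)
      = ((B₁ + 4) * (B₃ + 4)) * ((B₂ + 4) * (B₄ + 4)) := by ring
    _ ≤ T * T := mul_le_mul h13 h24 hp24 hT0
    _ = T ^ 2 := by ring
    _ ≤ (16 + ((2 + A₁) * B₁ + (2 + A₂) * B₂ + (2 + A₃) * B₃ + (2 + A₄) * B₄)) ^ 2 :=
        pow_le_pow_left₀ hT0 hLT 2
end
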